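/- Suppose there exist simple 4-(17,5,4), 4-(17,7,84), 4-(17,8,50) and 4-(17,9,90) designs, and simple 4-(18,6,28), 4-(18,8,294) and 4-(18,9,140) designs. Then there exists a simple 4-(35, 9, 26082) design (note 26082 = 414 × 63). -/

import Mathlib

/-!
Write the 35 points as `X ∪ Y` with `|X| = 17`, `|Y| = 18`, and take as blocks the sets `A ∪ C`
with `(A, C) ∈ 𝒟_r × ℰ_r` for seven pairs of families on `X` and `Y`, of block sizes
`(|A|, |C|) = (0,9), (1,8), (3,6), (5,4), (7,2), (8,1), (9,0)`: the given designs, completed by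
the families of all `s`-subsets of `X` or `Y`. As `|A|` differs from pair to pair, the seven
families of blocks are disjoint, and a 4-set `T` with `|T ∩ X| = i` lies in
`∑_r λ_i(𝒟_r) λ_{4-i}(ℰ_r)` blocks, where `λ_j` counts the blocks through a `j`-set. Double
counting gives `λ_j = λ (v-j choose 4-j) / (k-j choose 4-j)` for a `4-(v,k,λ)` design, and for
each `i = 0, …, 4` the sum is `26082`.
-/

/-- `SimpleDesignExists t v k lam` asserts the existence of a simple
`t-(v, k, lam)` design: a `v`-set `X` together with a set `B` of distinct
`k`-element subsets of `X` (blocks) such that every `t`-element subset of `X`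
is contained in exactly `lam` blocks. -/
def SimpleDesignExists (t v k lam : ℕ) : Prop :=
  ∃ (X : Finset ℕ) (B : Finset (Finset ℕ)),
    X.card = v ∧
    (∀ b ∈ B, b ⊆ X ∧ b.card = k) ∧
    (∀ T ⊆ X, T.card = t → (B.filter (fun b => T ⊆ b)).card = lam)

open Finset

namespace Finset

variable {α : Type*} [DecidableEq α]

theorem card_filter_superset_powersetCard {X T : Finset α} {s : ℕ} (hTX : T ⊆ X)
    (hTs : #T ≤ s) : #{S ∈ X.powersetCard s | T ⊆ S} = (#X - #T).choose (s - #T) := by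
  rw [← card_sdiff_of_subset hTX, ← card_powersetCard]
  refine card_nbij' (· \ T) (· ∪ T) ?_ ?_ ?_ ?_
  · intro S hS
    simp only [mem_coe, mem_filter, mem_powersetCard] at hS ⊢
    exact ⟨sdiff_subset_sdiff hS.1.1 le_rfl, by rw [card_sdiff_of_subset hS.2, hS.1.2]⟩
  · intro U hU
    simp only [mem_coe, mem_filter, mem_powersetCard] at hU ⊢
    have hUT : Disjoint U T := disjoint_of_subset_left hU.1 sdiff_disjoint
    refine ⟨⟨union_subset (hU.1.trans sdiff_subset) hTX, ?_⟩, subset_union_right⟩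
    rw [card_union_of_disjoint hUT, hU.2]
    omega
  · intro S hS
    exact sdiff_union_of_subset (mem_filter.1 hS).2
  · intro U hU
    simp only [mem_coe, mem_powersetCard] at hU
    exact union_sdiff_cancel_right (disjoint_of_subset_left hU.1 sdiff_disjoint)

theorem filter_superset_eq_empty_of_card_lt {B : Finset (Finset α)} {T : Finset α} {k : ℕ}
    (hB : ∀ b ∈ B, #b = k) (hkT : k < #T) : {b ∈ B | T ⊆ b} = ∅ :=
  filter_eq_empty_iff.2 fun b hb hTb => (card_le_card hTb).not_gt (hB b hb ▸ hkT)

theorem union_inter_eq_left_of_disjoint {A C X : Finset α} (hA : A ⊆ X) (hC : Disjoint C X) :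
    (A ∪ C) ∩ X = A := by
  rw [union_inter_distrib_right, inter_eq_left.2 hA, disjoint_iff_inter_eq_empty.1 hC, union_empty]

open scoped FinsetFamily in
theorem card_sups_of_disjoint {X Y : Finset α} {F G : Finset (Finset α)} (hXY : Disjoint X Y)
    (hF : ∀ A ∈ F, A ⊆ X) (hG : ∀ C ∈ G, C ⊆ Y) : #(F ⊻ G) = #F * #G := by
  refine (card_sups_iff _ _).2 fun p hp q hq hpq => ?_
  simp only [Set.mem_prod, mem_coe] at hp hq hpq
  have restrict : ∀ {A C : Finset α}, A ∈ F → C ∈ G → (A ∪ C) ∩ X = A ∧ (A ∪ C) ∩ Y = C :=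
    fun hA hC => ⟨union_inter_eq_left_of_disjoint (hF _ hA) (hXY.symm.mono_left (hG _ hC)),
      by rw [union_comm]; exact union_inter_eq_left_of_disjoint (hG _ hC) (hXY.mono_left (hF _ hA))⟩
  obtain ⟨hpX, hpY⟩ := restrict hp.1 hp.2
  obtain ⟨hqX, hqY⟩ := restrict hq.1 hq.2
  exact Prod.ext (hpX ▸ hqX ▸ congrArg (· ∩ X) hpq) (hpY ▸ hqY ▸ congrArg (· ∩ Y) hpq)

theorem card_filter_superset_mul_choose {X T : Finset α} {B : Finset (Finset α)} {t k lam : ℕ}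
    (hBX : ∀ b ∈ B, b ⊆ X) (hBk : ∀ b ∈ B, #b = k)
    (hB : ∀ S ⊆ X, #S = t → #{b ∈ B | S ⊆ b} = lam) (hTX : T ⊆ X) (hTt : #T ≤ t) :
    #{b ∈ B | T ⊆ b} * (k - #T).choose (t - #T) = (#X - #T).choose (t - #T) * lam := by
  have hdouble := card_mul_eq_card_mul (· ⊆ ·) (s := {S ∈ X.powersetCard t | T ⊆ S})
    (t := {b ∈ B | T ⊆ b}) (m := lam) (n := (k - #T).choose (t - #T)) ?_ ?_
  · rw [card_filter_superset_powersetCard hTX hTt] at hdouble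
    exact hdouble.symm
  · intro S hS
    simp only [mem_filter, mem_powersetCard] at hS
    rw [bipartiteAbove, filter_filter, ← hB S hS.1.1 hS.1.2]
    congr 1
    exact filter_congr fun b _ => ⟨And.right, fun hSb => ⟨hS.2.trans hSb, hSb⟩⟩
  · intro b hb
    simp only [mem_filter] at hb
    rw [bipartiteBelow, filter_filter, ← hBk b hb.1, ← card_filter_superset_powersetCard hb.2 hTt]
    congr 1
    ext S
    simp only [mem_filter, mem_powersetCard]
    exact ⟨fun ⟨⟨_, hSt⟩, hTS, hSb⟩ => ⟨⟨hSb, hSt⟩, hTS⟩,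
      fun ⟨⟨hSb, hSt⟩, hTS⟩ => ⟨⟨hSb.trans (hBX b hb.1), hSt⟩, hTS, hSb⟩⟩

open scoped FinsetFamily in
theorem filter_superset_sups {X Y T : Finset α} {F G : Finset (Finset α)} (hXY : Disjoint X Y)
    (hF : ∀ A ∈ F, A ⊆ X) (hG : ∀ C ∈ G, C ⊆ Y) (hT : T ⊆ X ∪ Y) :
    {b ∈ F ⊻ G | T ⊆ b} = {A ∈ F | T ∩ X ⊆ A} ⊻ {C ∈ G | T ∩ Y ⊆ C} := by
  ext b
  simp only [mem_filter, mem_sups, sup_eq_union]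
  constructor
  · rintro ⟨⟨A, hA, C, hC, rfl⟩, hTb⟩
    refine ⟨A, ⟨hA, ?_⟩, C, ⟨hC, ?_⟩, rfl⟩
    · refine (inter_subset_inter hTb subset_rfl).trans
        (union_inter_eq_left_of_disjoint (hF A hA) (hXY.symm.mono_left (hG C hC))).le
    · rw [union_comm] at hTb
      exact (inter_subset_inter hTb subset_rfl).trans
        (union_inter_eq_left_of_disjoint (hG C hC) (hXY.mono_left (hF A hA))).le
  · rintro ⟨A, ⟨hA, hTA⟩, C, ⟨hC, hTC⟩, rfl⟩
    refine ⟨⟨A, hA, C, hC, rfl⟩, ?_⟩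
    calc T = T ∩ X ∪ T ∩ Y := by rw [← inter_union_distrib_left, inter_eq_left.2 hT]
      _ ⊆ A ∪ C := union_subset_union hTA hTC

end Finset

structure BlockDesign {α : Type*} [DecidableEq α] (X : Finset α) (t : ℕ) where
  blocks : Finset (Finset α)
  blockSize : ℕ
  index : ℕ → ℕ
  subset_of_mem : ∀ b ∈ blocks, b ⊆ X
  card_of_mem : ∀ b ∈ blocks, #b = blockSize
  card_filter_superset : ∀ T ⊆ X, #T ≤ t → #{b ∈ blocks | T ⊆ b} = index #T

namespace BlockDesign

variable {α : Type*} [DecidableEq α]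

def complete (X : Finset α) (t s : ℕ) : BlockDesign X t where
  blocks := X.powersetCard s
  blockSize := s
  index j := if j ≤ s then (#X - j).choose (s - j) else 0
  subset_of_mem _ hb := (mem_powersetCard.1 hb).1
  card_of_mem _ hb := (mem_powersetCard.1 hb).2
  card_filter_superset T hTX _ := by
    split_ifs with hTs
    · exact card_filter_superset_powersetCard hTX hTs
    · rw [filter_superset_eq_empty_of_card_lt (fun b hb => (mem_powersetCard.1 hb).2)
        (not_le.1 hTs), card_empty]

def ofDesign {X : Finset α} {B : Finset (Finset α)} {t k lam : ℕ}
    (hBX : ∀ b ∈ B, b ⊆ X) (hBk : ∀ b ∈ B, #b = k)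
    (hB : ∀ S ⊆ X, #S = t → #{b ∈ B | S ⊆ b} = lam) (htk : t ≤ k) : BlockDesign X t where
  blocks := B
  blockSize := k
  index j := (#X - j).choose (t - j) * lam / (k - j).choose (t - j)
  subset_of_mem := hBX
  card_of_mem := hBk
  card_filter_superset T hTX hTt := by
    rw [← card_filter_superset_mul_choose hBX hBk hB hTX hTt,
      Nat.mul_div_cancel _ (Nat.choose_pos (by omega))]

def map {β : Type*} [DecidableEq β] {X : Finset α} {t : ℕ} (D : BlockDesign X t) (e : α ↪ β) :
    BlockDesign (X.map e) t where
  blocks := D.blocks.map (mapEmbedding e).toEmbedding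
  blockSize := D.blockSize
  index := D.index
  subset_of_mem _ hb' := by
    obtain ⟨b, hb, rfl⟩ := mem_map.1 hb'
    simpa using D.subset_of_mem b hb
  card_of_mem _ hb' := by
    obtain ⟨b, hb, rfl⟩ := mem_map.1 hb'
    simpa using D.card_of_mem b hb
  card_filter_superset _ hTX' hTt := by
    obtain ⟨T, hTX, rfl⟩ := subset_map_iff.1 hTX'
    rw [card_map] at hTt ⊢
    rw [filter_map, card_map, ← D.card_filter_superset T hTX hTt]
    congr 2
    ext b
    simp

end BlockDesign

theorem SimpleDesignExists.exists_blockDesign {t v k lam : ℕ} (h : SimpleDesignExists t v k lam)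
    (htk : t ≤ k) {Y : Finset ℕ} (hY : #Y = v) :
    ∃ D : BlockDesign Y t, D.blockSize = k ∧
      D.index = fun j => (v - j).choose (t - j) * lam / (k - j).choose (t - j) := by
  obtain ⟨X, B, hX, hB, hdes⟩ := h
  obtain ⟨σ, rfl⟩ := Equiv.Perm.exists_map_finset_eq X Y (hX.trans hY.symm)
  refine ⟨(BlockDesign.ofDesign (fun b hb => (hB b hb).1) (fun b hb => (hB b hb).2) hdes
    htk).map σ.toEmbedding, rfl, ?_⟩
  simp only [BlockDesign.map, BlockDesign.ofDesign, hX]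

namespace BlockDesign

open scoped FinsetFamily

variable {α : Type*} [DecidableEq α] {X Y : Finset α} {t : ℕ}

theorem card_filter_superset_sups (D : BlockDesign X t) (E : BlockDesign Y t)
    (hXY : Disjoint X Y) {T : Finset α} (hT : T ⊆ X ∪ Y) (hTt : #T ≤ t) :
    #{b ∈ D.blocks ⊻ E.blocks | T ⊆ b} = D.index #(T ∩ X) * E.index #(T ∩ Y) := by
  rw [filter_superset_sups hXY D.subset_of_mem E.subset_of_mem hT,
    card_sups_of_disjoint hXY (fun A hA => D.subset_of_mem A (mem_filter.1 hA).1)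
      (fun C hC => E.subset_of_mem C (mem_filter.1 hC).1),
    D.card_filter_superset _ inter_subset_right ((card_le_card inter_subset_left).trans hTt),
    E.card_filter_superset _ inter_subset_right ((card_le_card inter_subset_left).trans hTt)]

theorem card_inter_of_mem_sups (D : BlockDesign X t) (E : BlockDesign Y t) (hXY : Disjoint X Y)
    {b : Finset α} (hb : b ∈ D.blocks ⊻ E.blocks) : #(b ∩ X) = D.blockSize := by
  obtain ⟨A, hA, C, hC, rfl⟩ := mem_sups.1 hb
  rw [sup_eq_union, union_inter_eq_left_of_disjoint (D.subset_of_mem A hA)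
    (hXY.symm.mono_left (E.subset_of_mem C hC)), D.card_of_mem A hA]

theorem subset_union_and_card_of_mem_sups (D : BlockDesign X t) (E : BlockDesign Y t)
    (hXY : Disjoint X Y) {b : Finset α} (hb : b ∈ D.blocks ⊻ E.blocks) :
    b ⊆ X ∪ Y ∧ #b = D.blockSize + E.blockSize := by
  obtain ⟨A, hA, C, hC, rfl⟩ := mem_sups.1 hb
  have hAC : Disjoint A C := hXY.mono (D.subset_of_mem A hA) (E.subset_of_mem C hC)
  refine ⟨union_subset_union (D.subset_of_mem A hA) (E.subset_of_mem C hC), ?_⟩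
  rw [sup_eq_union, card_union_of_disjoint hAC, D.card_of_mem A hA, E.card_of_mem C hC]

end BlockDesign

open scoped FinsetFamily in
theorem simpleDesignExists_of_join {ι : Type*} [Fintype ι] {X Y : Finset ℕ} {t k lam : ℕ}
    (hXY : Disjoint X Y) (D : ι → BlockDesign X t) (E : ι → BlockDesign Y t)
    (hD : Function.Injective fun r => (D r).blockSize)
    (hk : ∀ r, (D r).blockSize + (E r).blockSize = k)
    (hlam : ∀ i ≤ t, ∑ r, (D r).index i * (E r).index (t - i) = lam) :
    SimpleDesignExists t (#X + #Y) k lam := by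
  refine ⟨X ∪ Y, univ.biUnion fun r => (D r).blocks ⊻ (E r).blocks, card_union_of_disjoint hXY,
    fun b hb => ?_, fun T hT hTt => ?_⟩
  · obtain ⟨r, -, hb⟩ := mem_biUnion.1 hb
    obtain ⟨hbXY, hbk⟩ := (D r).subset_union_and_card_of_mem_sups (E r) hXY hb
    exact ⟨hbXY, hbk.trans (hk r)⟩
  have hsplit : #(T ∩ X) + #(T ∩ Y) = t := by
    rw [← card_union_of_disjoint (hXY.mono inter_subset_right inter_subset_right),
      ← inter_union_distrib_left, inter_eq_left.2 hT, hTt]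
  have hdisj : ((univ : Finset ι) : Set ι).PairwiseDisjoint
      fun r => {b ∈ (D r).blocks ⊻ (E r).blocks | T ⊆ b} := by
    intro r _ r' _ hrr'
    refine disjoint_left.2 fun b hb hb' => hrr' (hD ?_)
    exact ((D r).card_inter_of_mem_sups (E r) hXY (mem_filter.1 hb).1).symm.trans
      ((D r').card_inter_of_mem_sups (E r') hXY (mem_filter.1 hb').1)
  rw [filter_biUnion, card_biUnion hdisj, ← hlam #(T ∩ X) (by omega),
    show t - #(T ∩ X) = #(T ∩ Y) by omega]
  exact sum_congr rfl fun r _ => (D r).card_filter_superset_sups (E r) hXY hT hTt.le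

theorem designExists_4_35_9_414
    (h1 : SimpleDesignExists 4 17 5 4)
    (h2 : SimpleDesignExists 4 17 7 84)
    (h3 : SimpleDesignExists 4 17 8 50)
    (h4 : SimpleDesignExists 4 17 9 90)
    (h5 : SimpleDesignExists 4 18 6 28)
    (h6 : SimpleDesignExists 4 18 8 294)
    (h7 : SimpleDesignExists 4 18 9 140)
    : SimpleDesignExists 4 35 9 26082 := by
  have hX : #(range 17) = 17 := card_range 17
  have hY : #((range 18).map (addLeftEmbedding 17)) = 18 := by simp
  obtain ⟨D5, hD5k, hD5⟩ := h1.exists_blockDesign (by norm_num) hX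
  obtain ⟨D7, hD7k, hD7⟩ := h2.exists_blockDesign (by norm_num) hX
  obtain ⟨D8, hD8k, hD8⟩ := h3.exists_blockDesign (by norm_num) hX
  obtain ⟨D9, hD9k, hD9⟩ := h4.exists_blockDesign (by norm_num) hX
  obtain ⟨E6, hE6k, hE6⟩ := h5.exists_blockDesign (by norm_num) hY
  obtain ⟨E8, hE8k, hE8⟩ := h6.exists_blockDesign (by norm_num) hY
  obtain ⟨E9, hE9k, hE9⟩ := h7.exists_blockDesign (by norm_num) hY
  open BlockDesign in
  have hjoin := simpleDesignExists_of_join (k := 9) (lam := 26082)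
    (disjoint_range_addLeftEmbedding 17 _)
    ![complete _ 4 0, complete _ 4 1, complete _ 4 3, D5, D7, D8, D9]
    ![E9, E8, E6, complete _ 4 4, complete _ 4 2, complete _ 4 1, complete _ 4 0]
    (by
      convert (by decide : Function.Injective ![0, 1, 3, 5, 7, 8, 9]) using 1
      funext r
      fin_cases r <;> simp [complete, hD5k, hD7k, hD8k, hD9k])
    (fun r => by fin_cases r <;> simp [complete, hD5k, hD7k, hD8k, hD9k, hE6k, hE8k, hE9k])
    (fun i hi => by
      simp only [Fin.sum_univ_seven]
      interval_cases i <;> simp [complete, hX, hY, hD5, hD7, hD8, hD9, hE6, hE8, hE9] <;> decide)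
  rwa [hX, hY] at hjoin
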